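/- Let q be a prime power, ℓ ≥ 1, and let Δ be a sequence of linear forms on V = F_qℓ consisting of one nonzero defining form for each of the (qℓ−1)/(q−1) hyperplanes of V. Then every cocircuit of the matroid M(Δ) has size q^{ℓ−1}, and consequently P(Δ) contains Sym^d(V*) if and only if d ≤ q^{ℓ−1}. -/

import Mathlib

open MvPolynomial Finset Submodule
open scoped Classical

noncomputable section

variable {K : Type*} [Field K] {ι σ : Type*} [Fintype ι]

/-- The product `α_S = ∏_{i ∈ S} α_i` of the linear forms indexed by `S`. -/
def prodForms (Δ : ι → MvPolynomial σ K) (S : Finset ι) : MvPolynomial σ K := ∏ i ∈ S, Δ i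

/-- `P(Δ)`: the span of all subproducts of `Δ` inside `Sym(V*)` (realized as a
polynomial ring). -/
def Pspace (Δ : ι → MvPolynomial σ K) : Submodule K (MvPolynomial σ K) :=
  span K (Set.range fun S : Finset ι => prodForms Δ S)

/-- The rank function of the realized matroid `M(Δ)`:
`r(S) = dim span {α_i : i ∈ S}`. -/
def rk (Δ : ι → MvPolynomial σ K) (S : Finset ι) : ℕ :=
  Module.finrank K (span K (Δ '' (S : Set ι)))

/-- The closure of `S` in the matroid `M(Δ)`. -/
def clos (Δ : ι → MvPolynomial σ K) (S : Finset ι) : Finset ι :=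
  Finset.univ.filter fun i => Δ i ∈ span K (Δ '' (S : Set ι))

/-- `X` is a flat of `M(Δ)`. -/
def IsFlat (Δ : ι → MvPolynomial σ K) (X : Finset ι) : Prop := clos Δ X = X

/-- `P(Δ)_X`: span of the `α_S` with `cl(E − S) = X`. -/
def PX (Δ : ι → MvPolynomial σ K) (X : Finset ι) : Submodule K (MvPolynomial σ K) :=
  span K {p | ∃ S : Finset ι, clos Δ (univ \ S) = X ∧ p = prodForms Δ S}

/-- `P(Δ)_{X,k}`: span of the `α_S` with `cl(E − S) = X` and `|E − S| = k`. -/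
def PXk (Δ : ι → MvPolynomial σ K) (X : Finset ι) (k : ℕ) :
    Submodule K (MvPolynomial σ K) :=
  span K {p | ∃ S : Finset ι,
    clos Δ (univ \ S) = X ∧ (univ \ S).card = k ∧ p = prodForms Δ S}

/-- `P(Δ)_{j,k}`: span of the `α_S` with `r(E − S) = j` and `|E − S| = k`. -/
def Pjk (Δ : ι → MvPolynomial σ K) (j k : ℕ) : Submodule K (MvPolynomial σ K) :=
  span K {p | ∃ S : Finset ι,
    rk Δ (univ \ S) = j ∧ (univ \ S).card = k ∧ p = prodForms Δ S}

/-- The Tutte polynomial in its corank–nullity form,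
`T = ∑_{S ⊆ E} (x−1)^{r(E)−r(S)} (y−1)^{|S|−r(S)}`, evaluated at elements `x`, `y` of a
commutative ring, for a finite ground set `α` with rank function `r`. -/
def tutteEval {α : Type*} [Fintype α] [DecidableEq α] {R : Type*} [CommRing R]
    (r : Finset α → ℕ) (x y : R) : R :=
  ∑ S : Finset α, (x - 1) ^ (r Finset.univ - r S) * (y - 1) ^ (S.card - r S)

/-- `S` is independent in `M(Δ)`. -/
def Indep (Δ : ι → MvPolynomial σ K) (S : Finset ι) : Prop := rk Δ S = S.card

/-- `C` is a circuit of `M(Δ)`: a minimal dependent set. -/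
def IsCircuit (Δ : ι → MvPolynomial σ K) (C : Finset ι) : Prop :=
  ¬ Indep Δ C ∧ ∀ i ∈ C, Indep Δ (C.erase i)

/-- `e` is externally active in `I`: it is the smallest element of a circuit
contained in `I ∪ {e}`. -/
def ExtAct [LinearOrder ι] (Δ : ι → MvPolynomial σ K) (I : Finset ι) (e : ι) : Prop :=
  ∃ C : Finset ι, IsCircuit Δ C ∧ C ⊆ insert e I ∧ e ∈ C ∧ ∀ f ∈ C, e ≤ f

/-- `ex(I)`: the set of externally active elements of `I`. -/
def exSet [LinearOrder ι] (Δ : ι → MvPolynomial σ K) (I : Finset ι) : Finset ι :=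
  Finset.univ.filter (ExtAct Δ I)

/-- `S` contains no broken circuit. -/
def NBC [LinearOrder ι] (Δ : ι → MvPolynomial σ K) (S : Finset ι) : Prop :=
  ∀ C : Finset ι, ∀ e, IsCircuit Δ C → e ∈ C → (∀ f ∈ C, e ≤ f) → ¬ C.erase e ⊆ S

end
noncomputable section AuxStmt11

open MvPolynomial Finset Submodule
open scoped Classical

lemma aux_degree_one {ℓ : ℕ} {m : Fin ℓ →₀ ℕ} (hm : m.degree = 1) :
    ∃ j, m = Finsupp.single j 1 := by
  classical
  have hsupp : m.support.Nonempty := by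
    rcases Finset.eq_empty_or_nonempty m.support with h | h
    · exfalso
      have h0 : m = 0 := by rwa [Finsupp.support_eq_empty] at h
      rw [h0, map_zero] at hm; omega
    · exact h
  obtain ⟨j, hj⟩ := hsupp
  refine ⟨j, ?_⟩
  have hj1 : 1 ≤ m j := Nat.one_le_iff_ne_zero.mpr (Finsupp.mem_support_iff.mp hj)
  have hsum : m j + ∑ k ∈ m.support.erase j, m k = 1 := by
    rw [Finset.add_sum_erase _ _ hj]; exact hm
  have hrest : ∀ k ∈ m.support.erase j, m k = 0 := by
    intro k hk
    refine (Finset.sum_eq_zero_iff.mp (by omega)) k hk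
  ext k
  rcases eq_or_ne k j with rfl | hkj
  · simp only [Finsupp.single_eq_same]; omega
  · rw [Finsupp.single_eq_of_ne' (Ne.symm hkj)]
    by_cases hks : k ∈ m.support
    · exact hrest k (Finset.mem_erase.mpr ⟨hkj, hks⟩)
    · exact Finsupp.notMem_support_iff.mp hks

lemma aux_degree_single {ℓ : ℕ} (j : Fin ℓ) : (Finsupp.single j 1 : Fin ℓ →₀ ℕ).degree = 1 := by
  classical
  exact Finsupp.degree_single j 1

/-- Coefficient vector of the linear part. -/
def vecL (K : Type*) [Field K] (ℓ : ℕ) : MvPolynomial (Fin ℓ) K →ₗ[K] (Fin ℓ → K) :=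
  LinearMap.pi fun j => MvPolynomial.lcoeff K (Finsupp.single j 1)

lemma vecL_apply {K : Type*} [Field K] {ℓ : ℕ} (p : MvPolynomial (Fin ℓ) K) (j : Fin ℓ) :
    vecL K ℓ p j = MvPolynomial.coeff (Finsupp.single j 1) p := rfl

lemma deg1_repr {K : Type*} [Field K] {ℓ : ℕ} {p : MvPolynomial (Fin ℓ) K}
    (hp : p ∈ homogeneousSubmodule (Fin ℓ) K 1) :
    p = ∑ j, vecL K ℓ p j • X j := by
  have hp' : p.IsHomogeneous 1 := (mem_homogeneousSubmodule _ _).mp hp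
  apply MvPolynomial.ext
  intro m
  rw [coeff_sum]
  by_cases hm : m.degree = 1
  · obtain ⟨j0, rfl⟩ := aux_degree_one hm
    rw [Finset.sum_eq_single j0]
    · rw [coeff_smul, coeff_X', if_pos rfl, smul_eq_mul, mul_one, vecL_apply]
    · intro b _ hb
      rw [coeff_smul, coeff_X', if_neg, smul_eq_mul, mul_zero]
      exact fun h => hb (Finsupp.single_left_injective one_ne_zero h)
    · intro h; exact absurd (Finset.mem_univ j0) h
  · rw [hp'.coeff_eq_zero hm]
    refine (Finset.sum_eq_zero ?_).symm
    intro j _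
    rw [coeff_smul, coeff_X', if_neg, smul_eq_mul, mul_zero]
    intro h
    exact hm (by rw [← h, aux_degree_single])


section VecDefs
variable {K : Type*} [Field K] {ℓ : ℕ}


lemma mem_H1_sum (c : Fin ℓ → K) :
    (∑ j, c j • (X j : MvPolynomial (Fin ℓ) K)) ∈ homogeneousSubmodule (Fin ℓ) K 1 :=
  sum_mem fun j _ => Submodule.smul_mem _ _ ((mem_homogeneousSubmodule _ _).mpr (isHomogeneous_X _ _))

lemma vecL_sum (c : Fin ℓ → K) :
    vecL K ℓ (∑ j, c j • (X j : MvPolynomial (Fin ℓ) K)) = c := by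
  funext j
  rw [vecL_apply, coeff_sum]
  rw [Finset.sum_eq_single j]
  · rw [coeff_smul, coeff_X', if_pos rfl, smul_eq_mul, mul_one]
  · intro b _ hb
    rw [coeff_smul, coeff_X', if_neg, smul_eq_mul, mul_zero]
    exact fun h => hb (Finsupp.single_left_injective one_ne_zero h)
  · intro h; exact absurd (Finset.mem_univ j) h

lemma vec_inj {p p' : MvPolynomial (Fin ℓ) K}
    (hp : p ∈ homogeneousSubmodule (Fin ℓ) K 1) (hp' : p' ∈ homogeneousSubmodule (Fin ℓ) K 1)
    (h : vecL K ℓ p = vecL K ℓ p') : p = p' := by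
  rw [deg1_repr hp, deg1_repr hp', h]

lemma eval_single_eq {p : MvPolynomial (Fin ℓ) K}
    (hp : p ∈ homogeneousSubmodule (Fin ℓ) K 1) (j0 : Fin ℓ) :
    MvPolynomial.eval (Pi.single j0 (1:K)) p = vecL K ℓ p j0 := by
  conv_lhs => rw [deg1_repr hp]
  rw [map_sum]
  rw [Finset.sum_eq_single j0]
  · rw [smul_eq_C_mul, map_mul, eval_C, eval_X, Pi.single_eq_same, mul_one]
  · intro b _ hb
    rw [smul_eq_C_mul, map_mul, eval_X, Pi.single_eq_of_ne hb, mul_zero]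
  · intro h; exact absurd (Finset.mem_univ j0) h

end VecDefs

section Counting


variable {K : Type*} [Field K] [Fintype K] {q ℓ n : ℕ}

lemma cardW (hq : Fintype.card K = q) (w : Fin n → Fin ℓ → K)
    (hne' : ∀ i, w i ≠ 0)
    (hdist' : ∀ i j, i ≠ j → ∀ c : K, w i ≠ c • w j)
    (hcov' : ∀ u : Fin ℓ → K, u ≠ 0 → ∃ i, ∃ c : K, u = c • w i)
    (W : Submodule K (Fin ℓ → K)) :
    (Finset.univ.filter fun i => w i ∈ W).card * (q - 1) + 1
      = q ^ (Module.finrank K ↥W) := by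
  classical
  set F : Finset (Fin ℓ → K) := Finset.univ.filter (fun x => x ∈ W) with hF
  have hcardF : F.card = q ^ (Module.finrank K ↥W) := by
    rw [hF, ← Fintype.card_subtype, ← hq]
    exact Module.card_eq_pow_finrank
  have h0F : (0 : Fin ℓ → K) ∈ F := by simp [hF, W.zero_mem]
  set A : Finset (Fin n) := Finset.univ.filter (fun i => w i ∈ W) with hA
  have hbU : F.erase 0 = A.biUnion
      (fun i => (Finset.univ.erase (0:K)).image (fun c => c • w i)) := by
    ext x
    simp only [Finset.mem_erase, Finset.mem_biUnion, Finset.mem_image, hF, hA,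
      Finset.mem_filter, Finset.mem_univ, true_and, and_true]
    constructor
    · rintro ⟨hx0, hxW⟩
      obtain ⟨i, c, rfl⟩ := hcov' x hx0
      have hc : c ≠ 0 := by rintro rfl; simp at hx0
      have hwi : w i ∈ W := by
        have h1 : w i = c⁻¹ • (c • w i) := by
          rw [smul_smul, inv_mul_cancel₀ hc, one_smul]
        rw [h1]; exact W.smul_mem _ hxW
      exact ⟨i, hwi, c, hc, rfl⟩
    · rintro ⟨i, hiW, c, hc0, rfl⟩
      exact ⟨smul_ne_zero hc0 (hne' i), W.smul_mem _ hiW⟩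
  have hdisj : ∀ i ∈ A, ∀ j ∈ A, i ≠ j →
      Disjoint ((Finset.univ.erase (0:K)).image (fun c => c • w i))
        ((Finset.univ.erase (0:K)).image (fun c => c • w j)) := by
    intro i _ j _ hij
    rw [Finset.disjoint_left]
    rintro x hxi hxj
    simp only [Finset.mem_image, Finset.mem_erase, Finset.mem_univ, and_true] at hxi hxj
    obtain ⟨c, hc, rfl⟩ := hxi
    obtain ⟨c', hc', he⟩ := hxj
    refine hdist' i j hij (c⁻¹ * c') ?_
    rw [mul_smul, he, smul_smul, inv_mul_cancel₀ hc, one_smul]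
  have hcard : (F.erase 0).card = A.card * (q - 1) := by
    rw [hbU, Finset.card_biUnion hdisj]
    have himg : ∀ i ∈ A, ((Finset.univ.erase (0:K)).image (fun c => c • w i)).card = q - 1 := by
      intro i _
      rw [Finset.card_image_of_injective _ (smul_left_injective K (hne' i)),
        Finset.card_erase_of_mem (Finset.mem_univ _), Finset.card_univ, hq]
    rw [Finset.sum_congr rfl himg, Finset.sum_const, smul_eq_mul]
  have herase : (F.erase 0).card = F.card - 1 := Finset.card_erase_of_mem h0F
  have hF1 : 1 ≤ F.card := Finset.card_pos.mpr ⟨0, h0F⟩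
  omega

lemma aux_arith (hq2 : 2 ≤ q) (hl : 0 < ℓ) (hn : n * (q - 1) = q ^ ℓ - 1) {x : ℕ}
    (hx : x * (q - 1) + 1 = q ^ (ℓ - 1)) (hxn : x ≤ n) : n - x = q ^ (ℓ - 1) := by
  have hpow : q ^ (ℓ - 1) * q = q ^ ℓ := by
    conv_rhs => rw [← Nat.sub_add_cancel hl]
    rw [pow_succ]
  have hq1 : q - 1 + 1 = q := by omega
  have h4 : q ^ (ℓ - 1) * (q - 1) + q ^ (ℓ - 1) = q ^ ℓ := by
    rw [← Nat.mul_succ, Nat.succ_eq_add_one, hq1, hpow]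
  have h6 : x * (q - 1) ≤ n * (q - 1) := Nat.mul_le_mul_right _ hxn
  have hgoal : (n - x) * (q - 1) = q ^ (ℓ - 1) * (q - 1) := by
    rw [Nat.sub_mul]
    have hql : 1 ≤ q ^ ℓ := Nat.one_le_pow _ _ (by omega)
    generalize hA : n * (q - 1) = A at *
    generalize hB : x * (q - 1) = B at *
    generalize hC : q ^ (ℓ - 1) * (q - 1) = C at *
    generalize hD : q ^ (ℓ - 1) = D at *
    generalize hE : q ^ ℓ = E at *
    omega
  exact Nat.eq_of_mul_eq_mul_right (by omega) hgoal

end Counting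

section Pigeon
variable {K : Type*} [Field K] [Fintype K] {q ℓ n : ℕ}

lemma pigeon (hq : Fintype.card K = q) (hl : 0 < ℓ) (hn : n * (q - 1) = q ^ ℓ - 1)
    (w : Fin n → Fin ℓ → K)
    (hne' : ∀ i, w i ≠ 0)
    (hdist' : ∀ i j, i ≠ j → ∀ c : K, w i ≠ c • w j)
    (hcov' : ∀ u : Fin ℓ → K, u ≠ 0 → ∃ i, ∃ c : K, u = c • w i)
    {i0 : Fin n} {B : Finset (Fin n)} (hi0 : i0 ∈ B) (hB : B.card + 1 ≤ q ^ (ℓ - 1)) :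
    ∃ i1 i2, i1 ∉ B ∧ i2 ∉ B ∧ i1 ≠ i2 ∧ w i2 ∈ span K {w i0, w i1} := by
  classical
  have hq2 : 2 ≤ q := hq ▸ Fintype.one_lt_card
  -- the count for an arbitrary hyperplane
  set π : (Fin ℓ → K) →ₗ[K] K := LinearMap.proj ⟨0, hl⟩ with hπ
  have hrankW0 : Module.finrank K ↥(LinearMap.ker π) = ℓ - 1 := by
    have hsurj : Function.Surjective π := by
      intro c; exact ⟨Pi.single ⟨0, hl⟩ c, by simp [hπ]⟩
    have hrn := LinearMap.finrank_range_add_finrank_ker π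
    rw [LinearMap.range_eq_top.mpr hsurj, finrank_top, Module.finrank_self,
      Module.finrank_pi] at hrn
    simp only [Fintype.card_fin] at hrn
    omega
  set a : ℕ := (Finset.univ.filter fun i => w i ∈ LinearMap.ker π).card with ha
  have haq : a * (q - 1) + 1 = q ^ (ℓ - 1) := by
    rw [ha, cardW hq w hne' hdist' hcov' (LinearMap.ker π), hrankW0]
  have hpow : q ^ (ℓ - 1) * q = q ^ ℓ := by
    conv_rhs => rw [← Nat.sub_add_cancel hl]
    rw [pow_succ]
  have hq1 : q - 1 + 1 = q := by omega
  have hql : 1 ≤ q ^ ℓ := Nat.one_le_pow _ _ (by omega)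
  have hnpos : 1 ≤ n := by
    rcases Nat.eq_zero_or_pos n with h0 | h; swap; · exact h
    rw [h0, Nat.zero_mul] at hn
    have : q ≤ q ^ ℓ := Nat.le_self_pow (by omega) q
    omega
  -- n - 1 = q * a
  have hn1 : n - 1 = q * a := by
    have h1 : (n - 1) * (q - 1) = (q * a) * (q - 1) := by
      rw [Nat.sub_mul, Nat.one_mul]
      have h2 : (q * a) * (q - 1) = q * (a * (q - 1)) := by ring
      rw [h2]
      have h3 : q * (a * (q - 1)) + q = q ^ ℓ := by
        have : a * (q - 1) + 1 = q ^ (ℓ - 1) := haq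
        calc q * (a * (q - 1)) + q = q * (a * (q - 1) + 1) := by ring
        _ = q * q ^ (ℓ - 1) := by rw [this]
        _ = q ^ ℓ := by rw [mul_comm, hpow]
      omega
    exact Nat.eq_of_mul_eq_mul_right (by omega) h1
  -- the free set
  set s : Finset (Fin n) := Finset.univ \ B with hs
  have hsB : ∀ i ∈ s, i ∉ B := by intro i hi; exact (Finset.mem_sdiff.mp hi).2
  have hsi0 : ∀ i ∈ s, i ≠ i0 := by
    intro i hi h; exact hsB i hi (h ▸ hi0)
  have hscard : a + 1 ≤ s.card := by
    rw [hs, Finset.card_univ_diff, Fintype.card_fin]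
    have hBa : B.card ≤ a * (q - 1) := by omega
    have haux : a * (q - 1) + a = a * q := by rw [← Nat.mul_succ, Nat.succ_eq_add_one, hq1]
    have hBn : B.card ≤ n := by
      have := Finset.card_le_univ B; simpa using this
    have hcomm : a * q = q * a := mul_comm a q
    omega
  -- pencils
  have hrank2 : ∀ i, i ≠ i0 → Module.finrank K ↥(span K {w i0, w i}) = 2 := by
    intro i hi
    have hindep : LinearIndependent K ![w i0, w i] := by
      rw [linearIndependent_fin2]
      constructor
      · simpa using hne' i
      · intro c hc
        simp only [Matrix.cons_val_one, Matrix.head_cons, Matrix.cons_val_zero] at hc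
        exact hdist' i0 i (Ne.symm hi) c hc.symm
    have hr := finrank_span_eq_card hindep
    have hrange : Set.range ![w i0, w i] = {w i0, w i} := by
      simp [Matrix.range_cons, Matrix.range_empty, Set.pair_comm]
    rw [hrange] at hr
    rw [hr, Fintype.card_fin]
  have hmempair : ∀ i : Fin n, w i ∈ span K {w i0, w i} :=
    fun i => subset_span (by simp)
  have hmempair0 : ∀ i : Fin n, w i0 ∈ span K {w i0, w i} :=
    fun i => subset_span (by simp)
  set g : Fin n → Finset (Fin n) :=
    fun i => (Finset.univ.filter (fun j => w j ∈ span K {w i0, w i})).erase i0 with hg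
  have hmemg : ∀ i, i ≠ i0 → i ∈ g i := by
    intro i hi
    simp only [hg]
    exact Finset.mem_erase.mpr ⟨hi, Finset.mem_filter.mpr ⟨Finset.mem_univ _, hmempair i⟩⟩
  have hgcard : ∀ i, i ≠ i0 → (g i).card = q := by
    intro i hi
    have hcnt := cardW hq w hne' hdist' hcov' (span K {w i0, w i})
    rw [hrank2 i hi] at hcnt
    have hqq : 1 ≤ q * q := Nat.mul_pos (by omega) (by omega)
    have hkey : (q + 1) * (q - 1) = q * q - 1 := by
      zify [show (1:ℕ) ≤ q by omega, hqq]
      ring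
    have hsq : q ^ 2 = q * q := by ring
    have hfil : (Finset.univ.filter (fun j => w j ∈ span K {w i0, w i})).card = q + 1 := by
      apply Nat.eq_of_mul_eq_mul_right (show 0 < q - 1 by omega)
      rw [hkey]
      omega
    simp only [hg]
    rw [Finset.card_erase_of_mem, hfil]
    · omega
    · exact Finset.mem_filter.mpr ⟨Finset.mem_univ _, hmempair0 i⟩
  have hfiber : ∀ i, i ≠ i0 → ∀ j ∈ g i, g j = g i := by
    intro i hi j hj
    simp only [hg] at hj
    obtain ⟨hji0, hjmem⟩ := Finset.mem_erase.mp hj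
    have hjsp : w j ∈ span K {w i0, w i} := (Finset.mem_filter.mp hjmem).2
    have hspan : span K {w i0, w j} = span K {w i0, w i} := by
      apply Submodule.eq_of_le_of_finrank_le
      · apply span_le.mpr
        intro x hx
        rcases hx with rfl | hx
        · exact hmempair0 i
        · rw [Set.mem_singleton_iff] at hx
          subst hx
          exact hjsp
      · rw [hrank2 i hi, hrank2 j hji0]
    simp only [hg]
    rw [hspan]
  -- the image
  set t : Finset (Finset (Fin n)) := s.image g with ht
  have hmap : ∀ i ∈ s, g i ∈ t := fun i hi => Finset.mem_image_of_mem _ hi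
  have hdisjt : ∀ u ∈ t, ∀ v ∈ t, u ≠ v → Disjoint u v := by
    intro u hu v hv huv
    obtain ⟨i, hi, rfl⟩ := Finset.mem_image.mp hu
    obtain ⟨i', hi', rfl⟩ := Finset.mem_image.mp hv
    rw [Finset.disjoint_left]
    intro x hxu hxv
    have h1 : g x = g i := hfiber i (hsi0 i hi) x hxu
    have h2 : g x = g i' := hfiber i' (hsi0 i' hi') x hxv
    exact huv (h1 ▸ h2 ▸ rfl)
  have htq : t.card * q ≤ n - 1 := by
    have hsub : t.biUnion (fun u => u) ⊆ Finset.univ.erase i0 := by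
      intro j hj
      obtain ⟨u, hu, hju⟩ := Finset.mem_biUnion.mp hj
      obtain ⟨i, _, rfl⟩ := Finset.mem_image.mp hu
      simp only [hg] at hju
      exact Finset.mem_erase.mpr ⟨(Finset.mem_erase.mp hju).1, Finset.mem_univ _⟩
    have hcardbi : (t.biUnion (fun u => u)).card = t.card * q := by
      rw [Finset.card_biUnion hdisjt]
      rw [Finset.sum_congr rfl (fun u hu => ?_), Finset.sum_const, smul_eq_mul]
      obtain ⟨i, hi, rfl⟩ := Finset.mem_image.mp hu
      exact hgcard i (hsi0 i hi)
    have := Finset.card_le_card hsub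
    rw [hcardbi, Finset.card_erase_of_mem (Finset.mem_univ _), Finset.card_univ,
      Fintype.card_fin] at this
    exact this
  have htcard : t.card < s.card := by
    have hta : t.card ≤ a := by
      have : t.card * q ≤ a * q := by
        rw [show a * q = q * a from mul_comm a q, ← hn1]; exact htq
      exact Nat.le_of_mul_le_mul_right this (by omega)
    omega
  obtain ⟨i1, hi1, i2, hi2, hne12, hgeq⟩ :=
    Finset.exists_ne_map_eq_of_card_lt_of_maps_to htcard hmap
  refine ⟨i1, i2, hsB i1 hi1, hsB i2 hi2, hne12, ?_⟩
  have : i2 ∈ g i1 := by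
    rw [hgeq]
    exact hmemg i2 (hsi0 i2 hi2)
  simp only [hg] at this
  exact (Finset.mem_filter.mp (Finset.mem_erase.mp this).2).2

end Pigeon

section QspanSec
variable {K : Type*} [Field K] {ι σ : Type*} [Fintype ι]

/-- degree-graded piece generators -/
def Qspan (Δ : ι → MvPolynomial σ K) (k : ℕ) : Submodule K (MvPolynomial σ K) :=
  span K {p | ∃ S : Finset ι, S.card = k ∧ p = prodForms Δ S}

lemma Qspan_le_Pspace (Δ : ι → MvPolynomial σ K) (k : ℕ) : Qspan Δ k ≤ Pspace Δ := by
  apply span_le.mpr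
  rintro p ⟨S, -, rfl⟩
  exact subset_span ⟨S, rfl⟩

lemma prodForms_mem_Qspan (Δ : ι → MvPolynomial σ K) {S : Finset ι} {k : ℕ} (h : S.card = k) :
    prodForms Δ S ∈ Qspan Δ k := subset_span ⟨S, h, rfl⟩

lemma prodForms_isHomogeneous (Δ : ι → MvPolynomial σ K)
    (hdeg : ∀ i, Δ i ∈ homogeneousSubmodule σ K 1) (S : Finset ι) :
    (prodForms Δ S).IsHomogeneous S.card := by
  have := IsHomogeneous.prod S Δ (fun _ => 1)
    (fun i _ => (mem_homogeneousSubmodule _ _).mp (hdeg i))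
  simpa [prodForms] using this

end QspanSec

section Transfer
variable {K : Type*} [Field K] {ℓ n : ℕ} {Δ : Fin n → MvPolynomial (Fin ℓ) K}

lemma span_le_H1 (hdeg : ∀ i, Δ i ∈ homogeneousSubmodule (Fin ℓ) K 1) (S : Finset (Fin n)) :
    span K (Δ '' (S : Set (Fin n))) ≤ homogeneousSubmodule (Fin ℓ) K 1 := by
  apply span_le.mpr
  rintro p ⟨i, -, rfl⟩
  exact hdeg i

lemma map_span_eq (S : Finset (Fin n)) :
    (span K (Δ '' (S : Set (Fin n)))).map (vecL K ℓ)
      = span K ((fun i => vecL K ℓ (Δ i)) '' (S : Set (Fin n))) := by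
  rw [← Submodule.span_image]
  congr 1
  rw [show (fun i => vecL K ℓ (Δ i)) = (vecL K ℓ) ∘ Δ from rfl, Set.image_comp]

lemma rk_transfer (hdeg : ∀ i, Δ i ∈ homogeneousSubmodule (Fin ℓ) K 1) (S : Finset (Fin n)) :
    Module.finrank K ↥(span K ((fun i => vecL K ℓ (Δ i)) '' (S : Set (Fin n))))
      = Module.finrank K ↥(span K (Δ '' (S : Set (Fin n)))) := by
  classical
  haveI : FiniteDimensional K ↥(span K (Δ '' (S : Set (Fin n)))) :=
    FiniteDimensional.span_of_finite K ((S : Set (Fin n)).toFinite.image Δ)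
  set N := span K (Δ '' (S : Set (Fin n))) with hN
  have hker : LinearMap.ker ((vecL K ℓ).domRestrict N) = ⊥ := by
    rw [LinearMap.ker_eq_bot']
    intro m hm
    have hm1 : (m : MvPolynomial (Fin ℓ) K) ∈ homogeneousSubmodule (Fin ℓ) K 1 :=
      span_le_H1 hdeg S m.2
    have : (m : MvPolynomial (Fin ℓ) K) = 0 :=
      vec_inj hm1 (Submodule.zero_mem _) (by rw [map_zero]; exact hm)
    exact Subtype.ext this
  have h := LinearMap.finrank_range_add_finrank_ker ((vecL K ℓ).domRestrict N)
  rw [LinearMap.range_domRestrict, hker, finrank_bot, add_zero, map_span_eq] at h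
  exact h

lemma mem_span_transfer (hdeg : ∀ i, Δ i ∈ homogeneousSubmodule (Fin ℓ) K 1)
    (S : Finset (Fin n)) (i : Fin n) :
    Δ i ∈ span K (Δ '' (S : Set (Fin n)))
      ↔ vecL K ℓ (Δ i) ∈ span K ((fun i => vecL K ℓ (Δ i)) '' (S : Set (Fin n))) := by
  rw [← map_span_eq]
  constructor
  · intro h
    exact Submodule.mem_map_of_mem h
  · intro h
    obtain ⟨p, hp, hpe⟩ := Submodule.mem_map.mp h
    have : p = Δ i := vec_inj (span_le_H1 hdeg S hp) (hdeg i) hpe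
    exact this ▸ hp

end Transfer

section MainAux
variable {K : Type*} [Field K] [Fintype K] {q ℓ n : ℕ}
variable {Δ : Fin n → MvPolynomial (Fin ℓ) K}

lemma wne' (hdeg : ∀ i, Δ i ∈ homogeneousSubmodule (Fin ℓ) K 1) (hne : ∀ i, Δ i ≠ 0) : ∀ i, vecL K ℓ (Δ i) ≠ 0 := by
  intro i h
  exact hne i (vec_inj (hdeg i) (Submodule.zero_mem _) (by rw [h, map_zero]))

lemma wdist' (hdeg : ∀ i, Δ i ∈ homogeneousSubmodule (Fin ℓ) K 1)
    (hdistinct : ∀ i j, i ≠ j → ∀ c : K, Δ i ≠ c • Δ j) : ∀ i j, i ≠ j → ∀ c : K, vecL K ℓ (Δ i) ≠ c • vecL K ℓ (Δ j) := by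
  intro i j hij c h
  refine hdistinct i j hij c (vec_inj (hdeg i) (Submodule.smul_mem _ _ (hdeg j)) ?_)
  rw [map_smul]; exact h

lemma wcov' (hcover : ∀ p ∈ homogeneousSubmodule (Fin ℓ) K 1, p ≠ 0 → ∃ i, ∃ c : K, p = c • Δ i) : ∀ u : Fin ℓ → K, u ≠ 0 → ∃ i, ∃ c : K, u = c • vecL K ℓ (Δ i) := by
  intro u hu
  obtain ⟨i, c, hic⟩ := hcover (∑ j, u j • (X j : MvPolynomial (Fin ℓ) K)) (mem_H1_sum u)
    (fun h => hu (by rw [← vecL_sum u, h, map_zero]))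
  exact ⟨i, c, by rw [← vecL_sum u, hic, map_smul]⟩

/-- The key replacement lemma for squares. -/
lemma lemB (hq : Fintype.card K = q) (hl : 0 < ℓ) (hn : n * (q - 1) = q ^ ℓ - 1)
    (hdeg : ∀ i, Δ i ∈ homogeneousSubmodule (Fin ℓ) K 1) (hne : ∀ i, Δ i ≠ 0)
    (hcover : ∀ p ∈ homogeneousSubmodule (Fin ℓ) K 1, p ≠ 0 → ∃ i, ∃ c : K, p = c • Δ i)
    (hdistinct : ∀ i j, i ≠ j → ∀ c : K, Δ i ≠ c • Δ j) (i0 : Fin n) (T' : Finset (Fin n)) (hi0 : i0 ∉ T')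
    (hT : T'.card + 2 ≤ q ^ (ℓ - 1)) :
    Δ i0 * (Δ i0 * prodForms Δ T') ∈ Qspan Δ (T'.card + 2) := by
  classical
  obtain ⟨i1, i2, h1B, h2B, h12, hsp⟩ :=
    pigeon hq hl hn (fun i => vecL K ℓ (Δ i)) (wne' hdeg hne) (wdist' hdeg hdistinct)
      (wcov' hcover) (B := insert i0 T') (Finset.mem_insert_self i0 T')
      (by rw [Finset.card_insert_of_notMem hi0]; omega)
  obtain ⟨x, y, hxy⟩ := Submodule.mem_span_pair.mp hsp
  have hpoly : Δ i2 = x • Δ i0 + y • Δ i1 := by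
    apply vec_inj (hdeg i2)
      (Submodule.add_mem _ (Submodule.smul_mem _ _ (hdeg i0)) (Submodule.smul_mem _ _ (hdeg i1)))
    rw [map_add, map_smul, map_smul]
    exact hxy.symm
  have h2not1 : i2 ≠ i1 := fun h => h12 h.symm
  have hx0 : x ≠ 0 := by
    rintro rfl
    rw [zero_smul, zero_add] at hpoly
    exact hdistinct i2 i1 h2not1 y hpoly
  have hΔ0 : Δ i0 = x⁻¹ • Δ i2 - (x⁻¹ * y) • Δ i1 := by
    have h1 : x • Δ i0 = Δ i2 - y • Δ i1 := by rw [hpoly]; abel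
    have h2 : x⁻¹ • (x • Δ i0) = x⁻¹ • (Δ i2 - y • Δ i1) := by rw [h1]
    rw [smul_smul, inv_mul_cancel₀ hx0, one_smul] at h2
    rw [h2, smul_sub, smul_smul]
  have h2T : i2 ∉ T' := fun h => h2B (Finset.mem_insert_of_mem h)
  have h1T : i1 ∉ T' := fun h => h1B (Finset.mem_insert_of_mem h)
  have h0ne2 : i0 ≠ i2 := fun h => h2B (h ▸ Finset.mem_insert_self i0 T')
  have h0ne1 : i0 ≠ i1 := fun h => h1B (h ▸ Finset.mem_insert_self i0 T')
  have hins : ∀ i, i ≠ i0 → i ∉ T' →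
      Δ i0 * (Δ i * prodForms Δ T') = prodForms Δ (insert i0 (insert i T')) ∧
        (insert i0 (insert i T')).card = T'.card + 2 := by
    intro i hii0 hiT
    have h0ni : i0 ∉ insert i T' := by
      simp only [Finset.mem_insert]
      push_neg
      exact ⟨fun h => hii0 h.symm, hi0⟩
    constructor
    · rw [prodForms, prodForms, Finset.prod_insert h0ni, Finset.prod_insert hiT]
    · rw [Finset.card_insert_of_notMem h0ni, Finset.card_insert_of_notMem hiT]
  have h2ne0 : i2 ≠ i0 := fun h => h0ne2 h.symm
  have h1ne0 : i1 ≠ i0 := fun h => h0ne1 h.symm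
  have key : Δ i0 * (Δ i0 * prodForms Δ T')
      = x⁻¹ • (Δ i0 * (Δ i2 * prodForms Δ T'))
        - (x⁻¹ * y) • (Δ i0 * (Δ i1 * prodForms Δ T')) := by
    nth_rewrite 1 [hΔ0]
    simp only [smul_eq_C_mul]
    ring
  rw [key, (hins i2 h2ne0 h2T).1, (hins i1 h1ne0 h1T).1]
  exact Submodule.sub_mem _
    (Submodule.smul_mem _ _ (prodForms_mem_Qspan Δ (hins i2 h2ne0 h2T).2))
    (Submodule.smul_mem _ _ (prodForms_mem_Qspan Δ (hins i1 h1ne0 h1T).2))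

/-- Multiplication by a variable stays in the span of squarefree products. -/
lemma genlem (hq : Fintype.card K = q) (hl : 0 < ℓ) (hn : n * (q - 1) = q ^ ℓ - 1)
    (hdeg : ∀ i, Δ i ∈ homogeneousSubmodule (Fin ℓ) K 1) (hne : ∀ i, Δ i ≠ 0)
    (hcover : ∀ p ∈ homogeneousSubmodule (Fin ℓ) K 1, p ≠ 0 → ∃ i, ∃ c : K, p = c • Δ i)
    (hdistinct : ∀ i j, i ≠ j → ∀ c : K, Δ i ≠ c • Δ j) (j : Fin ℓ) (T : Finset (Fin n)) (hT : T.card + 1 ≤ q ^ (ℓ - 1)) :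
    (X j : MvPolynomial (Fin ℓ) K) * prodForms Δ T ∈ Qspan Δ (T.card + 1) := by
  classical
  obtain ⟨i0, c, hXj⟩ := hcover (X j)
    ((mem_homogeneousSubmodule _ _).mpr (isHomogeneous_X _ _)) (X_ne_zero j)
  rw [hXj, smul_mul_assoc]
  apply Submodule.smul_mem
  by_cases hi0 : i0 ∈ T
  · have hsplit : prodForms Δ T = Δ i0 * prodForms Δ (T.erase i0) :=
      (Finset.mul_prod_erase T Δ hi0).symm
    have hTpos : 1 ≤ T.card := Finset.card_pos.mpr ⟨i0, hi0⟩
    have hcard : (T.erase i0).card + 2 = T.card + 1 := by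
      rw [Finset.card_erase_of_mem hi0]; omega
    have := lemB hq hl hn hdeg hne hcover hdistinct i0 (T.erase i0)
      (Finset.notMem_erase _ _) (by omega)
    rw [hsplit]
    rw [hcard] at this
    exact this
  · have : Δ i0 * prodForms Δ T = prodForms Δ (insert i0 T) := by
      rw [prodForms, prodForms, Finset.prod_insert hi0]
    rw [this]
    exact prodForms_mem_Qspan Δ (Finset.card_insert_of_notMem hi0)

/-- The main containment. -/
lemma mainlow (hq : Fintype.card K = q) (hl : 0 < ℓ) (hn : n * (q - 1) = q ^ ℓ - 1)
    (hdeg : ∀ i, Δ i ∈ homogeneousSubmodule (Fin ℓ) K 1) (hne : ∀ i, Δ i ≠ 0)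
    (hcover : ∀ p ∈ homogeneousSubmodule (Fin ℓ) K 1, p ≠ 0 → ∃ i, ∃ c : K, p = c • Δ i)
    (hdistinct : ∀ i j, i ≠ j → ∀ c : K, Δ i ≠ c • Δ j) : ∀ d, d ≤ q ^ (ℓ - 1) →
    homogeneousSubmodule (Fin ℓ) K d ≤ Qspan Δ d := by
  intro d
  induction d with
  | zero =>
    intro _ p hp
    have hp' : p.IsHomogeneous 0 := (mem_homogeneousSubmodule _ _).mp hp
    have hC : p = MvPolynomial.C (MvPolynomial.coeff 0 p) := by
      apply MvPolynomial.ext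
      intro m
      rcases eq_or_ne m 0 with rfl | hm
      · rw [coeff_C, if_pos rfl]
      · rw [coeff_C, if_neg (Ne.symm hm), hp'.coeff_eq_zero]
        rw [Ne, Finsupp.degree_eq_zero_iff]
        exact hm
    rw [hC, show (MvPolynomial.C (MvPolynomial.coeff 0 p) : MvPolynomial (Fin ℓ) K)
        = (MvPolynomial.coeff 0 p) • prodForms Δ ∅ by
      rw [prodForms, Finset.prod_empty, smul_eq_C_mul, mul_one]]
    exact Submodule.smul_mem _ _ (prodForms_mem_Qspan Δ Finset.card_empty)
  | succ d ih =>
    intro hd p hp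
    have hp' : p.IsHomogeneous (d + 1) := (mem_homogeneousSubmodule _ _).mp hp
    nth_rewrite 1 [MvPolynomial.as_sum p]
    apply Submodule.sum_mem
    intro m hm
    have hdm : m.degree = d + 1 := by
      by_contra hne'
      exact (MvPolynomial.mem_support_iff.mp hm) (hp'.coeff_eq_zero hne')
    obtain ⟨j, hj⟩ : ∃ j, m j ≠ 0 := by
      by_contra h
      push_neg at h
      have : m = 0 := Finsupp.ext h
      rw [this, map_zero] at hdm
      omega
    set m' := m - Finsupp.single j 1 with hm'def
    have hle : Finsupp.single j 1 ≤ m := by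
      rw [Finsupp.single_le_iff]
      omega
    have hmm : Finsupp.single j 1 + m' = m := by
      rw [hm'def]
      exact add_tsub_cancel_of_le hle
    have hm'deg : m'.degree = d := by
      have hdegadd : (Finsupp.single j 1 + m').degree = 1 + m'.degree := by
        rw [Finsupp.degree_eq_weight_one, map_add]
        congr 1
        rw [← Finsupp.degree_eq_weight_one]
        exact Finsupp.degree_single j 1
      rw [hmm] at hdegadd
      omega
    have hmono : (monomial m) (MvPolynomial.coeff m p)
        = (X j : MvPolynomial (Fin ℓ) K) * (monomial m') (MvPolynomial.coeff m p) := by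
      rw [show (X j : MvPolynomial (Fin ℓ) K) = (X j) ^ 1 from (pow_one _).symm,
        X_pow_eq_monomial, monomial_mul, one_mul, hmm]
    have hmem' : (monomial m') (MvPolynomial.coeff m p) ∈ Qspan Δ d :=
      ih (by omega) ((mem_homogeneousSubmodule _ _).mpr (isHomogeneous_monomial _ hm'deg))
    have hmapQ : (Qspan Δ d).map
        (LinearMap.mulLeft K (X j : MvPolynomial (Fin ℓ) K)) ≤ Qspan Δ (d + 1) := by
      rw [Qspan, Submodule.map_span]
      apply span_le.mpr
      rintro _ ⟨_, ⟨S, hS, rfl⟩, rfl⟩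
      have := genlem hq hl hn hdeg hne hcover hdistinct j S (by omega)
      rw [hS] at this
      exact this
    rw [hmono]
    exact hmapQ ⟨_, hmem', rfl⟩

lemma mainhigh (hq : Fintype.card K = q) (hl : 0 < ℓ) (hn : n * (q - 1) = q ^ ℓ - 1)
    (hdeg : ∀ i, Δ i ∈ homogeneousSubmodule (Fin ℓ) K 1) (hne : ∀ i, Δ i ≠ 0)
    (hcover : ∀ p ∈ homogeneousSubmodule (Fin ℓ) K 1, p ≠ 0 → ∃ i, ∃ c : K, p = c • Δ i)
    (hdistinct : ∀ i j, i ≠ j → ∀ c : K, Δ i ≠ c • Δ j)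
    {d : ℕ} (hd : homogeneousSubmodule (Fin ℓ) K d ≤ Pspace Δ) : d ≤ q ^ (ℓ - 1) := by
  classical
  by_contra hgt
  push_neg at hgt
  have hq2 : 2 ≤ q := hq ▸ Fintype.one_lt_card
  set j0 : Fin ℓ := ⟨0, hl⟩ with hj0
  set v : Fin ℓ → K := Pi.single j0 1 with hv
  set π : (Fin ℓ → K) →ₗ[K] K := LinearMap.proj j0 with hπ
  have hrankW0 : Module.finrank K ↥(LinearMap.ker π) = ℓ - 1 := by
    have hsurj : Function.Surjective π := by
      intro c; exact ⟨Pi.single j0 c, by simp [hπ]⟩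
    have hrn := LinearMap.finrank_range_add_finrank_ker π
    rw [LinearMap.range_eq_top.mpr hsurj, finrank_top, Module.finrank_self,
      Module.finrank_pi] at hrn
    simp only [Fintype.card_fin] at hrn
    omega
  set A : Finset (Fin n) :=
    Finset.univ.filter (fun i => vecL K ℓ (Δ i) ∈ LinearMap.ker π) with hA
  have hAcard : A.card * (q - 1) + 1 = q ^ (ℓ - 1) := by
    rw [hA, cardW hq (fun i => vecL K ℓ (Δ i)) (wne' hdeg hne) (wdist' hdeg hdistinct)
      (wcov' hcover) (LinearMap.ker π), hrankW0]
  have hAn : A.card ≤ n := by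
    calc A.card ≤ (Finset.univ : Finset (Fin n)).card := Finset.card_le_univ A
    _ = n := by rw [Finset.card_univ, Fintype.card_fin]
  have hcompl : (Finset.univ \ A).card = q ^ (ℓ - 1) := by
    rw [Finset.card_univ_diff, Fintype.card_fin]
    exact aux_arith hq2 hl hn hAcard hAn
  -- every S of size d meets A
  have hmeet : ∀ S : Finset (Fin n), S.card = d → ∃ i ∈ S, vecL K ℓ (Δ i) j0 = 0 := by
    intro S hS
    by_contra h
    push_neg at h
    have hsub : S ⊆ Finset.univ \ A := by
      intro i hi
      rw [Finset.mem_sdiff]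
      refine ⟨Finset.mem_univ _, ?_⟩
      rw [hA, Finset.mem_filter]
      rintro ⟨-, hker⟩
      exact h i hi (by simpa [hπ] using hker)
    have := Finset.card_le_card hsub
    rw [hS, hcompl] at this
    omega
  -- the evaluation functional kills Pspace in degree d
  have hvanish : ∀ p ∈ Pspace Δ,
      MvPolynomial.eval v ((homogeneousComponent d) p) = 0 := by
    intro p hp
    induction hp using Submodule.span_induction with
    | mem x hx =>
      obtain ⟨S, rfl⟩ := hx
      have hhom := prodForms_isHomogeneous Δ hdeg S
      rw [homogeneousComponent_of_mem ((mem_homogeneousSubmodule _ _).mpr hhom)]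
      by_cases hS : S.card = d
      · rw [if_pos hS.symm]
        obtain ⟨i, hiS, hi0⟩ := hmeet S hS
        rw [prodForms, map_prod]
        apply Finset.prod_eq_zero hiS
        rw [hv, eval_single_eq (hdeg i) j0]
        exact hi0
      · rw [if_neg (fun h => hS h.symm), map_zero]
    | zero => rw [map_zero, map_zero]
    | add x y _ _ hx hy => rw [map_add, map_add, hx, hy, add_zero]
    | smul c x _ hx => rw [map_smul, smul_eq_C_mul, map_mul, eval_C, hx, mul_zero]
  -- contradiction with X j0 ^ d
  have hp0 : (X j0 : MvPolynomial (Fin ℓ) K) ^ d ∈ homogeneousSubmodule (Fin ℓ) K d :=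
    (mem_homogeneousSubmodule _ _).mpr (isHomogeneous_X_pow j0 d)
  have h1 := hvanish _ (hd hp0)
  rw [homogeneousComponent_of_mem hp0, if_pos rfl, map_pow, eval_X] at h1
  rw [hv, Pi.single_eq_same, one_pow] at h1
  exact one_ne_zero h1
end MainAux

end AuxStmt11

/-- for the configuration of all hyperplanes of `V = 𝔽_q^ℓ` (one
nonzero defining linear form per hyperplane, so `n(q−1) = q^ℓ − 1`), every cocircuit of
`M(Δ)` has size `q^{ℓ−1}`, and `Sym^d(V*) ⊆ P(Δ)` iff `d ≤ q^{ℓ−1}`. -/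
theorem statement11 {K : Type*} [Field K] [Fintype K] {q ℓ n : ℕ}
    (hq : Fintype.card K = q) (hl : 0 < ℓ) (hn : n * (q - 1) = q ^ ℓ - 1)
    (Δ : Fin n → MvPolynomial (Fin ℓ) K)
    (hdeg : ∀ i, Δ i ∈ homogeneousSubmodule (Fin ℓ) K 1)
    (hne : ∀ i, Δ i ≠ 0)
    (hcover : ∀ p ∈ homogeneousSubmodule (Fin ℓ) K 1, p ≠ 0 → ∃ i, ∃ c : K, p = c • Δ i)
    (hdistinct : ∀ i j, i ≠ j → ∀ c : K, Δ i ≠ c • Δ j) :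
    (∀ H : Finset (Fin n), IsFlat Δ H → rk Δ H = ℓ - 1 →
        (Finset.univ \ H).card = q ^ (ℓ - 1)) ∧
      ∀ d, homogeneousSubmodule (Fin ℓ) K d ≤ Pspace Δ ↔ d ≤ q ^ (ℓ - 1) := by
  classical
  constructor
  · intro H hflat hrkH
    have hq2 : 2 ≤ q := hq ▸ Fintype.one_lt_card
    have hcnt := cardW hq (fun i => vecL K ℓ (Δ i)) (wne' hdeg hne) (wdist' hdeg hdistinct)
      (wcov' hcover) (span K ((fun i => vecL K ℓ (Δ i)) '' (H : Set (Fin n))))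
    have hrk2 : Module.finrank K ↥(span K (Δ '' (H : Set (Fin n)))) = ℓ - 1 := hrkH
    rw [rk_transfer hdeg H, hrk2] at hcnt
    have hfil : (Finset.univ.filter fun i =>
        vecL K ℓ (Δ i) ∈ span K ((fun i => vecL K ℓ (Δ i)) '' (H : Set (Fin n)))) = H := by
      have h1 : (Finset.univ.filter fun i =>
          vecL K ℓ (Δ i) ∈ span K ((fun i => vecL K ℓ (Δ i)) '' (H : Set (Fin n))))
            = clos Δ H := by
        ext i
        simp only [clos, Finset.mem_filter, Finset.mem_univ, true_and]
        exact (mem_span_transfer hdeg H i).symm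
      rw [h1]
      exact hflat
    rw [hfil] at hcnt
    rw [Finset.card_univ_diff, Fintype.card_fin]
    refine aux_arith hq2 hl hn hcnt ?_
    calc H.card ≤ (Finset.univ : Finset (Fin n)).card := Finset.card_le_univ H
    _ = n := by rw [Finset.card_univ, Fintype.card_fin]
  · intro d
    constructor
    · exact mainhigh hq hl hn hdeg hne hcover hdistinct
    · intro hdle
      exact le_trans (mainlow hq hl hn hdeg hne hcover hdistinct d hdle)
        (Qspan_le_Pspace Δ d)
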